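/- For every n ≥ 1, the following identities (Kupershmidt's bihamiltonian recursion for the Toda lattice) hold in 𝒜: ∇p₀(n) = ∇(v₀·p₀(n−1)) + ε⁻¹(E − E⁻¹)(p₋₁(n−1)), and ∇p₋₁(n) = v₀·∇p₋₁(n−1) + C_u(p₀(n−1)). -/

import Mathlib

/- STATEMENT 9.  Kupershmidt's bihamiltonian recursion for the Toda lattice:
for n ≥ 1, ∇p₀(n) = ∇(v₀·p₀(n−1)) + ε⁻¹(E − E⁻¹)(p₋₁(n−1)) and
∇p₋₁(n) = v₀·∇p₋₁(n−1) + C_u(p₀(n−1)), where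
C_u(f) = ε⁻¹q(E^{1/2}(w·E^{1/2}f) − E^{−1/2}(w·E^{−1/2}f)). -/
noncomputable section

/-- variables of `S`: `none` is `q`, `some (inl n)` is `uₙ`, `some (inr n)` is `vₙ`. -/
abbrev Var : Type := Option (ℕ ⊕ ℕ)

/-- `S = ℚ[q][uₙ, vₙ : n ≥ 0]`. -/
abbrev S : Type := MvPolynomial Var ℚ

/-- `R = S[w,w⁻¹]`, Laurent polynomials in the invertible variable `w` (= `e^u`):
the element `Σ sₙwⁿ` is the finitely supported function `n ↦ sₙ`. -/
abbrev R : Type := AddMonoidAlgebra S ℤ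

/-- `𝒜 = R[[ε]][ε⁻¹]`, formal Laurent series in `ε` over `R`. -/
abbrev A : Type := LaurentSeries R

/-- the variable `uₙ`. -/
def uS (n : ℕ) : S := MvPolynomial.X (some (Sum.inl n))

/-- the variable `vₙ`. -/
def vS (n : ℕ) : S := MvPolynomial.X (some (Sum.inr n))

/-- the variable `q`. -/
def qS : S := MvPolynomial.X none

/-- the derivation of `S` with `∂uₙ = uₙ₊₁`, `∂vₙ = vₙ₊₁`, `∂q = 0`. -/
def dS : Derivation ℚ S S :=
  MvPolynomial.mkDerivation _ fun i =>
    match i with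
    | none => 0
    | some j => MvPolynomial.X (some (Sum.map Nat.succ Nat.succ j))

/-- the derivation `∂` of `R`, extending `dS` with `∂w = w·u₁`
(so on `s·wⁿ` it gives `(∂s + n·u₁·s)·wⁿ`). -/
def dR (f : R) : R :=
  f.coeff.sum fun n s => AddMonoidAlgebra.single n (dS s + n • (uS 1 * s))

lemma dR_zero : dR 0 = 0 := Finsupp.sum_zero_index

/-- a subset of `ℤ` which is bounded below is partially well ordered. -/
lemma bddBelow_isPWO {s : Set ℤ} (h : BddBelow s) : s.IsPWO :=
  Set.IsWF.isPWO (BddBelow.wellFoundedOn_lt h)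

/-- apply an operator `T` on `R` with `T 0 = 0` coefficientwise to a Laurent
series in `ε`. -/
def cw (T : R → R) (hT : T 0 = 0) (x : A) : A :=
  ⟨fun i => T (x.coeff i),
   x.isPWO_support'.mono (by
     intro i hi
     simp only [Function.mem_support] at hi ⊢
     exact fun h0 => hi (by rw [h0, hT]))⟩

/-- `∂` on `𝒜 = R[[ε]][ε⁻¹]` (acting on coefficients; `∂ε = 0`). -/
def dA : A → A := cw dR dR_zero

/-- the upward closure of a p.w.o. subset of `ℤ` is p.w.o. -/
lemma upward_isPWO {s : Set ℤ} (hs : s.IsPWO) : {i : ℤ | ∃ j ∈ s, j ≤ i}.IsPWO := by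
  rcases s.eq_empty_or_nonempty with h | h
  · convert Set.isPWO_empty (α := ℤ) using 1
    ext i; simp [h]
  · apply bddBelow_isPWO
    refine ⟨hs.isWF.min h, ?_⟩
    rintro i ⟨j, hj, hji⟩
    exact le_trans (Set.IsWF.min_le _ h hj) hji

/-- `E^c = exp(cε∂) = Σₘ (cε)ᵐ∂ᵐ/m!`, a well-defined operator on `𝒜` (the sum
is finite in each `ε`-degree). -/
def Ec (c : ℚ) (x : A) : A :=
  ⟨fun i => ∑ᶠ m : ℕ, (c ^ m / (m.factorial : ℚ)) • (dR^[m] (x.coeff (i - m))),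
   (upward_isPWO x.isPWO_support').mono (by
      intro i hi
      simp only [Function.mem_support] at hi
      by_contra hcon
      rw [Set.mem_setOf_eq] at hcon
      push_neg at hcon
      apply hi
      apply finsum_eq_zero_of_forall_eq_zero
      intro m
      have hx : x.coeff (i - m) = 0 := by
        by_contra hx
        exact absurd (hcon (i - m) (Function.mem_support.mpr hx)) (by omega)
      rw [hx, Function.iterate_fixed dR_zero, smul_zero])⟩

/-- `ε ∈ 𝒜`. -/
def epsA : A := HahnSeries.single 1 1

/-- `ε⁻¹ ∈ 𝒜`. -/
def epsInv : A := HahnSeries.single (-1) 1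

/-- `∇ = ε⁻¹(E^{1/2} − E^{−1/2})`. -/
def nab (x : A) : A := epsInv * (Ec (1/2) x - Ec (-1/2) x)

/-- `Δ = E^{1/2} + E^{−1/2}`. -/
def DeltaOp (x : A) : A := Ec (1/2) x + Ec (-1/2) x

/-- `v₀ ∈ R`. -/
def vR : R := AddMonoidAlgebra.single 0 (vS 0)

/-- `u₀ ∈ R`. -/
def uR : R := AddMonoidAlgebra.single 0 (uS 0)

/-- `w ∈ R`. -/
def wR : R := AddMonoidAlgebra.single 1 1

/-- `q·w ∈ R`. -/
def qwR : R := AddMonoidAlgebra.single 1 qS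

/-- constants `R ⊆ 𝒜`. -/
def CA (r : R) : A := HahnSeries.single 0 r

/-- twisted Laurent series `Σ_{i ≤ N} aᵢΛⁱ` over `𝒜`, represented by their
coefficient functions. -/
def Phi : Type := ℤ → A

/-- the twisted product, determined by
`(aΛⁱ)·(bΛʲ) = (E^{−j/2}a)(E^{i/2}b)Λ^{i+j}` (for the elements appearing below
the sum has finite support). -/
def phiMul (a b : Phi) : Phi := fun n =>
  ∑ᶠ i : ℤ, (Ec (-(((n - i) : ℤ) : ℚ) / 2) (a i)) * (Ec (((i : ℤ) : ℚ) / 2) (b (n - i)))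

/-- the Lax operator `L = Λ + v₀ + q·w·Λ⁻¹` of the Toda lattice. -/
def LaxT : Phi := fun i =>
  if i = 1 then 1 else if i = 0 then CA vR else if i = -1 then CA qwR else 0

/-- `1 ∈ Φ(𝒜)`. -/
def onePhi : Phi := fun i => if i = 0 then 1 else 0

/-- `Lⁿ ∈ Φ(𝒜)`. -/
def Lpow (n : ℕ) : Phi := (phiMul LaxT)^[n] onePhi

/-- `p_k(n) ∈ 𝒜`: the coefficient of `Λᵏ` in `Lⁿ`. -/
def p (k : ℤ) (n : ℕ) : A := Lpow n k

/-- `q ∈ 𝒜`. -/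
def qA : A := CA (AddMonoidAlgebra.single 0 qS)

/-- `w ∈ 𝒜`. -/
def wA : A := CA wR

/-- `v₀ ∈ 𝒜`. -/
def vA : A := CA vR

/-- the operator `C_u(f) = ε⁻¹q(E^{1/2}(w·E^{1/2}f) − E^{−1/2}(w·E^{−1/2}f))`. -/
def Cu (f : A) : A :=
  epsInv * qA * (Ec (1/2) (wA * Ec (1/2) f) - Ec (-1/2) (wA * Ec (-1/2) f))

section DRLemmas

open AddMonoidAlgebra Finsupp

lemma dR_single (n : ℤ) (s : S) :
    dR (AddMonoidAlgebra.single n s) = AddMonoidAlgebra.single n (dS s + n • (uS 1 * s)) := by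
  unfold dR
  rw [AddMonoidAlgebra.coeff_single, Finsupp.sum_single_index]
  simp

lemma dR_add (f g : R) : dR (f + g) = dR f + dR g := by
  unfold dR
  rw [AddMonoidAlgebra.coeff_add, Finsupp.sum_add_index']
  · intro n; simp
  · intro n s t
    rw [← AddMonoidAlgebra.single_add]
    congr 1
    rw [map_add, mul_add, smul_add]
    abel

lemma dR_mul (f g : R) : dR (f * g) = dR f * g + f * dR g := by
  induction f using AddMonoidAlgebra.induction_linear with
  | zero => simp [dR_zero]
  | add a b ha hb => rw [add_mul, dR_add, ha, hb, dR_add]; ring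
  | single n s =>
    induction g using AddMonoidAlgebra.induction_linear with
    | zero => simp [dR_zero]
    | add a b ha hb => rw [mul_add, dR_add, ha, hb, dR_add]; ring
    | single m t =>
      rw [AddMonoidAlgebra.single_mul_single, dR_single, dR_single, dR_single,
        AddMonoidAlgebra.single_mul_single, AddMonoidAlgebra.single_mul_single,
        ← AddMonoidAlgebra.single_add]
      congr 1
      rw [Derivation.leibniz]
      simp only [smul_eq_mul, add_smul, zsmul_eq_mul]
      push_cast
      ring

lemma dR_one : dR 1 = 0 := by
  have : (1 : R) = AddMonoidAlgebra.single 0 1 := rfl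
  rw [this, dR_single]
  simp

end DRLemmas
section Infra
open Finset

lemma dR_smul (q : ℚ) (f : R) : dR (q • f) = q • dR f := by
  induction f using AddMonoidAlgebra.induction_linear with
  | zero => simp [dR_zero]
  | add a b ha hb => rw [smul_add, dR_add, ha, hb, dR_add, smul_add]
  | single n s =>
    rw [AddMonoidAlgebra.smul_single, dR_single, dR_single, AddMonoidAlgebra.smul_single]
    congr 1
    rw [Derivation.map_smul, smul_add]
    congr 1
    rw [mul_smul_comm, smul_comm]

lemma dR_iter_zero (m : ℕ) : dR^[m] 0 = 0 := Function.iterate_fixed dR_zero m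

lemma dR_iter_add (m : ℕ) (f g : R) : dR^[m] (f + g) = dR^[m] f + dR^[m] g := by
  induction m generalizing f g with
  | zero => simp
  | succ m ih => rw [Function.iterate_succ_apply, dR_add, ih, ← Function.iterate_succ_apply, ← Function.iterate_succ_apply]

lemma dR_iter_smul (m : ℕ) (q : ℚ) (f : R) : dR^[m] (q • f) = q • dR^[m] f := by
  induction m generalizing f with
  | zero => simp
  | succ m ih => rw [Function.iterate_succ_apply, dR_smul, ih, ← Function.iterate_succ_apply]

lemma dR_nsmul (k : ℕ) (f : R) : dR (k • f) = k • dR f := by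
  induction k with
  | zero => simp [dR_zero]
  | succ k ih => rw [succ_nsmul, succ_nsmul, dR_add, ih]

lemma dR_sum {ι : Type*} (s : Finset ι) (f : ι → R) :
    dR (∑ j ∈ s, f j) = ∑ j ∈ s, dR (f j) := by
  classical
  induction s using Finset.induction_on with
  | empty => simp [dR_zero]
  | insert _ _ h ih => rw [Finset.sum_insert h, Finset.sum_insert h, dR_add, ih]

lemma dR_iter_sum {ι : Type*} (m : ℕ) (s : Finset ι) (f : ι → R) :
    dR^[m] (∑ j ∈ s, f j) = ∑ j ∈ s, dR^[m] (f j) := by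
  classical
  induction s using Finset.induction_on with
  | empty => simp [dR_iter_zero]
  | insert _ _ h ih => rw [Finset.sum_insert h, Finset.sum_insert h, dR_iter_add, ih]

lemma dR_iter_mul (n : ℕ) (p q : R) :
    dR^[n] (p * q) =
      ∑ k ∈ range (n + 1), n.choose k • (dR^[n - k] p * dR^[k] q) := by
  induction n with
  | zero => simp [Finset.range]
  | succ n IH =>
    calc
      dR^[n + 1] (p * q) =
          dR (∑ k ∈ range n.succ,
              n.choose k • (dR^[n - k] p * dR^[k] q)) := by
        rw [Function.iterate_succ_apply', IH]
      _ = (∑ k ∈ range n.succ,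
            n.choose k • (dR^[n - k + 1] p * dR^[k] q)) +
          ∑ k ∈ range n.succ,
            n.choose k • (dR^[n - k] p * dR^[k + 1] q) := by
        rw [dR_sum, ← sum_add_distrib]
        refine Finset.sum_congr rfl fun k _ => ?_
        rw [dR_nsmul, dR_mul, smul_add]
        congr 2
        · rw [← Function.iterate_succ_apply' dR]
        · rw [← Function.iterate_succ_apply' dR]
      _ = (∑ k ∈ range n.succ,
                n.choose k.succ • (dR^[n - k] p * dR^[k + 1] q)) +
              1 • (dR^[n + 1] p * dR^[0] q) +
            ∑ k ∈ range n.succ, n.choose k • (dR^[n - k] p * dR^[k + 1] q) :=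
        ?_
      _ = ((∑ k ∈ range n.succ, n.choose k • (dR^[n - k] p * dR^[k + 1] q)) +
              ∑ k ∈ range n.succ,
                n.choose k.succ • (dR^[n - k] p * dR^[k + 1] q)) +
            1 • (dR^[n + 1] p * dR^[0] q) := by
        rw [add_comm, add_assoc]
      _ = (∑ i ∈ range n.succ,
              (n + 1).choose (i + 1) • (dR^[n + 1 - (i + 1)] p * dR^[i + 1] q)) +
            1 • (dR^[n + 1] p * dR^[0] q) := by
        simp_rw [Nat.choose_succ_succ, Nat.succ_sub_succ, add_smul, sum_add_distrib]
      _ = ∑ k ∈ range n.succ.succ,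
            n.succ.choose k • (dR^[n.succ - k] p * dR^[k] q) := by
        rw [sum_range_succ' _ n.succ, Nat.choose_zero_right, tsub_zero]
    congr
    refine (sum_range_succ' _ _).trans (congr_arg₂ (· + ·) ?_ ?_)
    · rw [sum_range_succ, Nat.choose_succ_self, zero_smul, add_zero]
      refine sum_congr rfl fun k hk => ?_
      rw [mem_range] at hk
      congr
      omega
    · rw [Nat.choose_zero_right, tsub_zero]

end Infra
section Coeffs
open Finset

lemma exists_lb (x : A) : ∃ l : ℤ, ∀ j, j < l → x.coeff j = 0 := by
  rcases Set.eq_empty_or_nonempty x.support with h | h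
  · exact ⟨0, fun j _ => by
      by_contra hc
      exact absurd (Set.eq_empty_iff_forall_notMem.mp h j) (by simpa [HahnSeries.mem_support])⟩
  · refine ⟨x.isWF_support.min h, fun j hj => ?_⟩
    by_contra hc
    exact Set.IsWF.not_lt_min x.isWF_support h (hc : j ∈ x.support) hj

/-- a window-change lemma for sums. -/
lemma sum_window {M : Type*} [AddCommMonoid M] (f : ℤ → M) (S T : Finset ℤ)
    (h : ∀ j, f j ≠ 0 → j ∈ S ∧ j ∈ T) : ∑ j ∈ S, f j = ∑ j ∈ T, f j := by
  rw [← Finset.sum_subset (Finset.inter_subset_left (s₁ := S) (s₂ := T))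
      (fun j hS hST => by by_contra hc; exact hST (Finset.mem_inter.mpr ⟨hS, (h j hc).2⟩)),
    ← Finset.sum_subset (Finset.inter_subset_right (s₁ := S) (s₂ := T))
      (fun j hT hST => by by_contra hc; exact hST (Finset.mem_inter.mpr ⟨(h j hc).1, hT⟩))]

/-- the coefficient of a product over any large enough window. -/
lemma mul_coeff_sum (x y : A) (j : ℤ) (J : Finset ℤ)
    (h : ∀ a, x.coeff a ≠ 0 → y.coeff (j - a) ≠ 0 → a ∈ J) :
    (x * y).coeff j = ∑ a ∈ J, x.coeff a * y.coeff (j - a) := by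
  classical
  rw [HahnSeries.coeff_mul]
  rw [show (Finset.antidiagonal x.isPWO_support y.isPWO_support j)
      = (J.filter (fun a => x.coeff a ≠ 0 ∧ y.coeff (j - a) ≠ 0)).image
          (fun a => (a, j - a)) from ?_]
  · rw [Finset.sum_image (by intro a _ b _ hab; exact (Prod.mk.injEq _ _ _ _ ▸ hab).1)]
    rw [Finset.sum_filter]
    refine Finset.sum_congr rfl fun a _ => ?_
    by_cases hx : x.coeff a = 0
    · simp [hx]
    · by_cases hy : y.coeff (j - a) = 0
      · simp [hx, hy]
      · simp [hx, hy]
  · ext p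
    simp only [Finset.mem_antidiagonal, Finset.mem_image, Finset.mem_filter,
      HahnSeries.mem_support]
    constructor
    · rintro ⟨h1, h2, h3⟩
      refine ⟨p.1, ⟨h p.1 h1 (by rw [show j - p.1 = p.2 by omega]; exact h2), h1,
        by rw [show j - p.1 = p.2 by omega]; exact h2⟩, ?_⟩
      rw [show j - p.1 = p.2 by omega]
    · rintro ⟨a, ⟨_, h1, h2⟩, rfl⟩
      exact ⟨h1, h2, by omega⟩

lemma mul_lb {x y : A} {lx ly : ℤ} (hx : ∀ j, j < lx → x.coeff j = 0)
    (hy : ∀ j, j < ly → y.coeff j = 0) :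
    ∀ j, j < lx + ly → (x * y).coeff j = 0 := by
  intro j hj
  have hmem : ∀ a, x.coeff a ≠ 0 → y.coeff (j - a) ≠ 0 → a ∈ (∅ : Finset ℤ) := by
    intro a ha hya
    exfalso
    have h1 : lx ≤ a := by by_contra hc; exact ha (hx a (by omega))
    have h2 : ly ≤ j - a := by by_contra hc; exact hya (hy _ (by omega))
    omega
  rw [mul_coeff_sum x y j ∅ hmem, Finset.sum_empty]

lemma Ec_coeff (c : ℚ) (x : A) (i : ℤ) :
    (Ec c x).coeff i
      = ∑ᶠ m : ℕ, (c ^ m / (m.factorial : ℚ)) • (dR^[m] (x.coeff (i - m))) := rfl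

lemma Ec_coeff_sum (c : ℚ) (x : A) (i : ℤ) (N : ℕ)
    (hN : ∀ m : ℕ, N ≤ m → x.coeff (i - m) = 0) :
    (Ec c x).coeff i
      = ∑ m ∈ range N, (c ^ m / (m.factorial : ℚ)) • (dR^[m] (x.coeff (i - m))) := by
  rw [Ec_coeff]
  apply finsum_eq_sum_of_support_subset
  intro m hm
  simp only [Function.mem_support] at hm
  simp only [Finset.coe_range, Set.mem_Iio]
  by_contra hc
  exact hm (by rw [hN m (by omega), dR_iter_zero, smul_zero])

lemma Ec_lb {x : A} {l : ℤ} (hx : ∀ j, j < l → x.coeff j = 0) (c : ℚ) :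
    ∀ j, j < l → (Ec c x).coeff j = 0 := by
  intro j hj
  rw [Ec_coeff]
  apply finsum_eq_zero_of_forall_eq_zero
  intro m
  rw [hx (j - m) (by omega), dR_iter_zero, smul_zero]

lemma Ec_map_zero (c : ℚ) : Ec c 0 = 0 := by
  refine HahnSeries.coeff_inj.mp (funext fun i => ?_)
  rw [HahnSeries.coeff_zero, Ec_coeff]
  apply finsum_eq_zero_of_forall_eq_zero
  intro m
  rw [HahnSeries.coeff_zero, dR_iter_zero, smul_zero]

lemma Ec_map_add (c : ℚ) (x y : A) : Ec c (x + y) = Ec c x + Ec c y := by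
  refine HahnSeries.coeff_inj.mp (funext fun i => ?_)
  obtain ⟨Nx, hNx⟩ : ∃ N : ℕ, ∀ m : ℕ, N ≤ m → x.coeff (i - m) = 0 := by
    obtain ⟨l, hl⟩ := exists_lb x
    exact ⟨(i - l + 1).toNat, fun m hm => hl _ (by
      have := Int.self_le_toNat (i - l + 1); omega)⟩
  obtain ⟨Ny, hNy⟩ : ∃ N : ℕ, ∀ m : ℕ, N ≤ m → y.coeff (i - m) = 0 := by
    obtain ⟨l, hl⟩ := exists_lb y
    exact ⟨(i - l + 1).toNat, fun m hm => hl _ (by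
      have := Int.self_le_toNat (i - l + 1); omega)⟩
  rw [HahnSeries.coeff_add, Ec_coeff_sum c x i (max Nx Ny) (fun m hm => hNx m (by omega)),
    Ec_coeff_sum c y i (max Nx Ny) (fun m hm => hNy m (by omega)),
    Ec_coeff_sum c (x + y) i (max Nx Ny)
      (fun m hm => by rw [HahnSeries.coeff_add, hNx m (by omega), hNy m (by omega), add_zero]),
    ← Finset.sum_add_distrib]
  refine Finset.sum_congr rfl fun m _ => ?_
  rw [HahnSeries.coeff_add, dR_iter_add, smul_add]

lemma exists_bnd (x : A) (i : ℤ) : ∃ N : ℕ, ∀ m : ℕ, N ≤ m → x.coeff (i - m) = 0 := by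
  obtain ⟨l, hl⟩ := exists_lb x
  exact ⟨(i - l + 1).toNat, fun m hm => hl _ (by
    have := Int.self_le_toNat (i - l + 1); omega)⟩

lemma Ec_CA (c : ℚ) (r : R) (hr : dR r = 0) : Ec c (CA r) = CA r := by
  have hiter : ∀ m : ℕ, 1 ≤ m → dR^[m] r = 0 := fun m hm => by
    rw [show m = (m - 1) + 1 by omega, Function.iterate_succ_apply, hr, dR_iter_zero]
  refine HahnSeries.coeff_inj.mp (funext fun i => ?_)
  simp only [CA]
  rw [Ec_coeff, finsum_eq_single _ i.toNat ?_]
  · by_cases hi : i = 0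
    · subst hi
      simp
    · rw [HahnSeries.coeff_single_of_ne hi]
      by_cases hpos : 0 < i
      · rw [show i - (i.toNat : ℤ) = 0 by omega, HahnSeries.coeff_single_same,
          hiter i.toNat (by omega), smul_zero]
      · rw [HahnSeries.coeff_single_of_ne (show i - (i.toNat : ℤ) ≠ 0 by omega),
          dR_iter_zero, smul_zero]
  · intro m hm
    rw [HahnSeries.coeff_single_of_ne (show i - (m : ℤ) ≠ 0 by omega), dR_iter_zero, smul_zero]

end Coeffs
section EcAlg
open Finset

lemma sum_triangle {M : Type*} [AddCommMonoid M] (N : ℕ) (F : ℕ → ℕ → M)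
    (hF : ∀ a b, N ≤ a + b → F a b = 0) :
    ∑ m ∈ range N, ∑ k ∈ range (m + 1), F (m - k) k
      = ∑ a ∈ range N, ∑ b ∈ range N, F a b := by
  have h1 : ∀ a, a < N → ∑ b ∈ range N, F a b = ∑ b ∈ range (N - a), F a b := by
    intro a _
    refine (Finset.sum_subset (by intro b hb; simp only [mem_range] at *; omega) ?_).symm
    intro b hb hnb
    simp only [mem_range] at *
    exact hF a b (by omega)
  rw [Finset.sum_congr rfl (fun a ha => h1 a (by simpa using ha))]
  rw [Finset.sum_sigma', Finset.sum_sigma']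
  refine Finset.sum_nbij' (fun p => ⟨p.1 - p.2, p.2⟩) (fun q => ⟨q.1 + q.2, q.2⟩)
    ?_ ?_ ?_ ?_ ?_
  · rintro ⟨m, k⟩ hmk
    simp only [Finset.mem_sigma, mem_range] at *
    omega
  · rintro ⟨a, b⟩ hab
    simp only [Finset.mem_sigma, mem_range] at *
    omega
  · rintro ⟨m, k⟩ hmk
    simp only [Finset.mem_sigma, mem_range] at hmk
    simp only [Sigma.mk.inj_iff, heq_eq_eq, and_true]
    omega
  · rintro ⟨a, b⟩ hab
    simp only [Finset.mem_sigma, mem_range] at hab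
    simp only [Sigma.mk.inj_iff, heq_eq_eq, and_true]
    omega
  · rintro ⟨m, k⟩ _
    rfl

lemma scalar_eq (c c' : ℚ) (m k : ℕ) (h : k ≤ m) :
    (c ^ (m - k) * c' ^ k / (m.factorial : ℚ)) * (m.choose k : ℚ)
      = (c ^ (m - k) / ((m - k).factorial : ℚ)) * (c' ^ k / (k.factorial : ℚ)) := by
  have key : ((m.choose k : ℕ) : ℚ) * (k.factorial : ℚ) * ((m - k).factorial : ℚ)
      = (m.factorial : ℚ) := by
    rw [← Nat.cast_mul, ← Nat.cast_mul, Nat.choose_mul_factorial_mul_factorial h]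
  have h1 : ((m - k).factorial : ℚ) ≠ 0 := Nat.cast_ne_zero.mpr (Nat.factorial_ne_zero _)
  have h2 : ((k).factorial : ℚ) ≠ 0 := Nat.cast_ne_zero.mpr (Nat.factorial_ne_zero _)
  have h3 : ((m).factorial : ℚ) ≠ 0 := Nat.cast_ne_zero.mpr (Nat.factorial_ne_zero _)
  field_simp
  linear_combination (c ^ (m - k) * c' ^ k) * key

lemma scalar_eq' (c : ℚ) (m k : ℕ) (h : k ≤ m) :
    (c ^ m / (m.factorial : ℚ)) * (m.choose k : ℚ)
      = (c ^ (m - k) / ((m - k).factorial : ℚ)) * (c ^ k / (k.factorial : ℚ)) := by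
  rw [← scalar_eq c c m k h]
  congr 2
  rw [← pow_add]
  congr 1
  omega

lemma Ec_map_mul (c : ℚ) (x y : A) : Ec c (x * y) = Ec c x * Ec c y := by
  refine HahnSeries.coeff_inj.mp (funext fun i => ?_)
  obtain ⟨lx, hlx⟩ := exists_lb x
  obtain ⟨ly, hly⟩ := exists_lb y
  set J : Finset ℤ := Finset.Icc lx (i - ly) with hJ
  set N : ℕ := (i - lx - ly + 1).toNat + 1 with hN
  have hNlarge : (i - lx - ly) < N := by
    have := Int.self_le_toNat (i - lx - ly + 1); omega
  -- canonical summand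
  set G : ℕ → ℕ → ℤ → R := fun a b j =>
    ((c ^ a / (a.factorial : ℚ)) * (c ^ b / (b.factorial : ℚ)))
      • (dR^[a] (x.coeff j) * dR^[b] (y.coeff (i - a - b - j))) with hG
  have hGsupp : ∀ a b j, G a b j ≠ 0 → lx ≤ j ∧ j ≤ i - ly - a - b := by
    intro a b j hne
    constructor
    · by_contra hc
      exact hne (by rw [hG]; simp only; rw [hlx j (by omega), dR_iter_zero, zero_mul, smul_zero])
    · by_contra hc
      exact hne (by rw [hG]; simp only; rw [hly (i - a - b - j) (by omega),
        dR_iter_zero, mul_zero, smul_zero])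
  have hGzero : ∀ a b, N ≤ a + b → ∀ j, G a b j = 0 := by
    intro a b hab j
    by_contra hc
    obtain ⟨h1, h2⟩ := hGsupp a b j hc
    omega
  -- LHS
  have hlhs : (Ec c (x * y)).coeff i
      = ∑ m ∈ range N, ∑ k ∈ range (m + 1), ∑ j ∈ J, G (m - k) k j := by
    rw [Ec_coeff_sum c (x * y) i N (fun m hm => mul_lb hlx hly _ (by omega))]
    refine Finset.sum_congr rfl fun m hm => ?_
    rw [mem_range] at hm
    have hmem : ∀ a, x.coeff a ≠ 0 → y.coeff (i - (m : ℤ) - a) ≠ 0 → a ∈ J := by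
      intro a ha hya
      have h1 : lx ≤ a := by by_contra hc; exact ha (hlx a (by omega))
      have h2 : ly ≤ i - m - a := by by_contra hc; exact hya (hly _ (by omega))
      rw [hJ]; simp only [Finset.mem_Icc]; omega
    rw [mul_coeff_sum x y (i - m) J hmem, dR_iter_sum, Finset.smul_sum, Finset.sum_comm]
    refine Finset.sum_congr rfl fun j hj => ?_
    rw [dR_iter_mul, Finset.smul_sum]
    refine Finset.sum_congr rfl fun k hk => ?_
    rw [mem_range] at hk
    rw [← Nat.cast_smul_eq_nsmul ℚ, smul_smul, hG]
    simp only
    rw [show i - (((m - k : ℕ) : ℤ)) - (k : ℤ) - j = i - (m : ℤ) - j by omega]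
    rw [mul_comm (c ^ m / (m.factorial : ℚ)) ((m.choose k : ℕ) : ℚ),
      mul_comm ((m.choose k : ℕ) : ℚ) (c ^ m / (m.factorial : ℚ)),
      scalar_eq' c m k (by omega)]
  -- RHS
  have hrhs : (Ec c x * Ec c y).coeff i
      = ∑ a ∈ range N, ∑ b ∈ range N, ∑ j ∈ J, G a b j := by
    have hmem : ∀ a, (Ec c x).coeff a ≠ 0 → (Ec c y).coeff (i - a) ≠ 0 → a ∈ J := by
      intro a ha hya
      have h1 : lx ≤ a := by by_contra hc; exact ha (Ec_lb hlx c a (by omega))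
      have h2 : ly ≤ i - a := by by_contra hc; exact hya (Ec_lb hly c _ (by omega))
      rw [hJ]; simp only [Finset.mem_Icc]; omega
    rw [mul_coeff_sum _ _ i J hmem]
    have hstep : ∀ j ∈ J, (Ec c x).coeff j * (Ec c y).coeff (i - j)
        = ∑ a ∈ range N, ∑ b ∈ range N, G a b (j - a) := by
      intro j hj
      rw [hJ, Finset.mem_Icc] at hj
      rw [Ec_coeff_sum c x j N (fun m hm => hlx _ (by omega)),
        Ec_coeff_sum c y (i - j) N (fun m hm => hly _ (by omega)),
        Finset.sum_mul_sum]
      refine Finset.sum_congr rfl fun a _ => Finset.sum_congr rfl fun b _ => ?_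
      rw [smul_mul_smul_comm, hG]
      simp only
      rw [show i - (a : ℤ) - (b : ℤ) - (j - a) = i - j - b by omega]
    rw [Finset.sum_congr rfl hstep, Finset.sum_comm]
    refine Finset.sum_congr rfl fun a _ => ?_
    rw [Finset.sum_comm]
    refine Finset.sum_congr rfl fun b _ => ?_
    have hinj : ∀ s ∈ J, ∀ t ∈ J, s - (a : ℤ) = t - (a : ℤ) → s = t := by
      intro s _ t _ hst; omega
    have himg : ∑ t ∈ J.image (fun s => s - (a : ℤ)), G a b t
        = ∑ t ∈ J, G a b (t - (a : ℤ)) := Finset.sum_image hinj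
    rw [← himg]
    refine sum_window _ _ _ fun j hjne => ?_
    obtain ⟨h1, h2⟩ := hGsupp a b j hjne
    constructor
    · rw [Finset.mem_image]
      exact ⟨j + a, by rw [hJ]; simp only [Finset.mem_Icc]; omega, by omega⟩
    · rw [hJ]; simp only [Finset.mem_Icc]; omega
  rw [hlhs, hrhs]
  exact sum_triangle N (fun a b => ∑ j ∈ J, G a b j)
    (fun a b hab => Finset.sum_eq_zero fun j _ => hGzero a b hab j)

end EcAlg
section EcComp
open Finset

lemma Ec_comp (c c' : ℚ) (x : A) : Ec c (Ec c' x) = Ec (c + c') x := by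
  refine HahnSeries.coeff_inj.mp (funext fun i => ?_)
  obtain ⟨l, hl⟩ := exists_lb x
  set N : ℕ := (i - l + 1).toNat + 1 with hN
  have hNlarge : i - l < N := by have := Int.self_le_toNat (i - l + 1); omega
  have hbnd : ∀ m : ℕ, N ≤ m → x.coeff (i - m) = 0 := fun m hm => hl _ (by omega)
  set F : ℕ → ℕ → R := fun a b =>
    ((c ^ a / (a.factorial : ℚ)) * (c' ^ b / (b.factorial : ℚ)))
      • dR^[a + b] (x.coeff (i - a - b)) with hF
  have hFzero : ∀ a b, N ≤ a + b → F a b = 0 := by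
    intro a b hab
    rw [hF]; simp only
    rw [show i - (a:ℤ) - (b:ℤ) = i - ((a+b : ℕ) : ℤ) by push_cast; ring,
      hbnd (a+b) hab, dR_iter_zero, smul_zero]
  have hlhs : (Ec c (Ec c' x)).coeff i = ∑ a ∈ range N, ∑ b ∈ range N, F a b := by
    rw [Ec_coeff_sum c (Ec c' x) i N (fun m hm => Ec_lb hl c' _ (by omega))]
    refine Finset.sum_congr rfl fun m hm => ?_
    rw [Ec_coeff_sum c' x (i - m) N (fun k hk => by
      rw [show i - (m:ℤ) - (k:ℤ) = i - ((m + k : ℕ) : ℤ) by push_cast; ring]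
      exact hbnd (m+k) (by omega)), dR_iter_sum, Finset.smul_sum]
    refine Finset.sum_congr rfl fun k _ => ?_
    rw [dR_iter_smul, smul_smul, hF]
    simp only
    rw [← Function.iterate_add_apply]
  rw [hlhs, ← sum_triangle N F hFzero,
    Ec_coeff_sum (c + c') x i N hbnd]
  refine Finset.sum_congr rfl fun m hm => ?_
  rw [add_pow, Finset.sum_div, Finset.sum_smul, ← Finset.sum_range_reflect]
  refine Finset.sum_congr rfl fun k hk => ?_
  rw [mem_range] at hk
  rw [show m + 1 - 1 - k = m - k from rfl, show m - (m - k) = k by omega, hF]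
  simp only
  rw [show k + (m - k) = m by omega,
    show i - (k : ℤ) - ((m - k : ℕ) : ℤ) = i - (m : ℤ) by omega]
  congr 1
  have hsc := scalar_eq c' c m k (by omega)
  linear_combination -hsc

lemma Ec_one (c : ℚ) : Ec c 1 = 1 := by
  have h := Ec_CA c 1 dR_one
  rwa [show CA 1 = 1 from HahnSeries.single_zero_one] at h

lemma Ec_id (x : A) : Ec 0 x = x := by
  refine HahnSeries.coeff_inj.mp (funext fun i => ?_)
  rw [Ec_coeff, finsum_eq_single _ 0 ?_]
  · simp
  · intro m hm
    rw [zero_pow hm, zero_div, zero_smul]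

end EcComp
section PhiLemmas
open Finset

lemma dS_q : dS qS = 0 := by
  unfold dS qS
  rw [MvPolynomial.mkDerivation_X]

lemma dR_q : dR (AddMonoidAlgebra.single (0 : ℤ) qS) = 0 := by
  rw [dR_single, dS_q]
  simp

lemma Ec_qA (c : ℚ) : Ec c qA = qA := Ec_CA c _ dR_q

lemma qw_eq : CA qwR = qA * wA := by
  unfold qA wA qwR CA wR
  rw [HahnSeries.single_mul_single, AddMonoidAlgebra.single_mul_single]
  norm_num

lemma Ec_qw (c : ℚ) : Ec c (CA qwR) = qA * Ec c wA := by
  rw [qw_eq, Ec_map_mul, Ec_qA]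

lemma LaxT_one : LaxT 1 = 1 := rfl
lemma LaxT_zero : LaxT 0 = CA vR := rfl
lemma LaxT_negone : LaxT (-1) = CA qwR := rfl
lemma LaxT_other (i : ℤ) (h1 : i ≠ 1) (h0 : i ≠ 0) (hn : i ≠ -1) : LaxT i = 0 := by
  unfold LaxT
  rw [if_neg h1, if_neg h0, if_neg hn]

set_option synthInstance.maxHeartbeats 1000000 in
lemma phiMul_left (b : Phi) (n : ℤ) :
    phiMul LaxT b n
      = Ec (1/2) (b (n - 1)) + Ec (-(n : ℚ) / 2) (CA vR) * b n
        + Ec ((-(n : ℚ) - 1) / 2) (CA qwR) * Ec (-(1/2)) (b (n + 1)) := by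
  unfold phiMul
  rw [finsum_eq_sum_of_support_subset _ (s := ({1, 0, -1} : Finset ℤ)) ?_]
  · rw [show ({1, 0, -1} : Finset ℤ) = insert 1 (insert 0 {-1}) from rfl,
      Finset.sum_insert (by decide), Finset.sum_insert (by decide), Finset.sum_singleton]
    rw [LaxT_one, LaxT_zero, LaxT_negone, Ec_one, one_mul,
      show n - (0:ℤ) = n by ring, show n - (-1 : ℤ) = n + 1 by ring]
    push_cast
    norm_num [Ec_id]
    rw [show (-1 + -(n:ℚ)) / 2 = (-(n:ℚ) - 1) / 2 by ring, ← add_assoc]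
  · intro i hi
    simp only [Function.mem_support] at hi
    simp only [Finset.coe_insert, Set.mem_insert_iff, Finset.coe_singleton,
      Set.mem_singleton_iff]
    by_contra hc
    push_neg at hc
    exact hi (by rw [LaxT_other i hc.1 hc.2.1 hc.2.2, Ec_map_zero, zero_mul])

set_option synthInstance.maxHeartbeats 1000000 in
lemma phiMul_right (a : Phi) (n : ℤ) :
    phiMul a LaxT n
      = Ec (-(1/2)) (a (n - 1)) + a n * Ec ((n : ℚ) / 2) (CA vR)
        + Ec (1/2) (a (n + 1)) * Ec (((n : ℚ) + 1) / 2) (CA qwR) := by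
  unfold phiMul
  rw [finsum_eq_sum_of_support_subset _ (s := ({n - 1, n, n + 1} : Finset ℤ)) ?_]
  · rw [show ({n - 1, n, n + 1} : Finset ℤ) = insert (n-1) (insert n {n+1}) from rfl,
      Finset.sum_insert (by simp; omega), Finset.sum_insert (by simp),
      Finset.sum_singleton]
    rw [show n - (n - 1) = 1 by ring, show n - (n + 1) = -1 by ring, sub_self,
      LaxT_one, LaxT_zero, LaxT_negone, Ec_one, mul_one]
    push_cast
    norm_num [Ec_id]
    rw [← add_assoc]
  · intro i hi
    simp only [Function.mem_support] at hi
    simp only [Finset.coe_insert, Set.mem_insert_iff, Finset.coe_singleton,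
      Set.mem_singleton_iff]
    by_contra hc
    push_neg at hc
    exact hi (by rw [LaxT_other (n - i) (by omega) (by omega) (by omega),
      Ec_map_zero, mul_zero])

end PhiLemmas
section Comm

set_option synthInstance.maxHeartbeats 1000000 in
lemma base_comm : phiMul LaxT onePhi = phiMul onePhi LaxT := by
  funext n
  rw [phiMul_left, phiMul_right]
  by_cases h1 : n = 1
  · subst h1; norm_num [onePhi, Ec_one, Ec_map_zero]
  by_cases h0 : n = 0
  · subst h0; norm_num [onePhi, Ec_one, Ec_map_zero, Ec_id]
  by_cases hm : n = -1
  · subst hm; norm_num [onePhi, Ec_one, Ec_map_zero, Ec_id]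
  · rw [show onePhi (n - 1) = 0 from if_neg (by omega),
      show onePhi n = 0 from if_neg (by omega),
      show onePhi (n + 1) = 0 from if_neg (by omega)]
    simp [Ec_map_zero]

set_option synthInstance.maxHeartbeats 1000000 in
set_option maxHeartbeats 1000000 in
lemma LaxT_comm (X : Phi) :
    phiMul LaxT (phiMul X LaxT) = phiMul (phiMul LaxT X) LaxT := by
  funext n
  rw [phiMul_left (phiMul X LaxT) n, phiMul_right X (n - 1), phiMul_right X n,
    phiMul_right X (n + 1), phiMul_right (phiMul LaxT X) n, phiMul_left X (n - 1),
    phiMul_left X n, phiMul_left X (n + 1)]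
  push_cast
  simp only [Ec_map_add, Ec_map_mul, Ec_comp]
  ring_nf

end Comm
lemma Lpow_succ (n : ℕ) : Lpow (n + 1) = phiMul LaxT (Lpow n) :=
  Function.iterate_succ_apply' _ _ _

lemma pow_comm (n : ℕ) : phiMul LaxT (Lpow n) = phiMul (Lpow n) LaxT := by
  induction n with
  | zero => exact base_comm
  | succ n ih =>
    rw [Lpow_succ, ih, LaxT_comm, ih]

set_option synthInstance.maxHeartbeats 1000000 in
set_option maxHeartbeats 1000000 in
theorem toda_kupershmidt_recursion (n : ℕ) :
    nab (p 0 (n + 1)) =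
      nab (vA * p 0 n) + epsInv * (Ec 1 (p (-1) n) - Ec (-1) (p (-1) n)) ∧
    nab (p (-1) (n + 1)) = vA * nab (p (-1) n) + Cu (p 0 n) := by
  have hL : Lpow (n+1) = phiMul LaxT (Lpow n) := Lpow_succ n
  have hR : Lpow (n+1) = phiMul (Lpow n) LaxT := by rw [hL, pow_comm]
  have hA := congrArg (Ec (1/2 : ℚ)) (congrFun hL 0)
  rw [phiMul_left] at hA
  push_cast at hA
  simp only [Ec_map_add, Ec_map_mul, Ec_comp] at hA
  norm_num [Ec_id, Ec_one] at hA
  have hB := congrArg (Ec (-(1/2) : ℚ)) (congrFun hR 0)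
  rw [phiMul_right] at hB
  push_cast at hB
  simp only [Ec_map_add, Ec_map_mul, Ec_comp] at hB
  norm_num [Ec_id, Ec_one] at hB
  have hC := congrArg (Ec (1/2 : ℚ)) (congrFun hR (-1))
  rw [phiMul_right] at hC
  push_cast at hC
  simp only [Ec_map_add, Ec_map_mul, Ec_comp, Ec_qw] at hC
  norm_num [Ec_id, Ec_one] at hC
  have hD := congrArg (Ec (-(1/2) : ℚ)) (congrFun hL (-1))
  rw [phiMul_left] at hD
  push_cast at hD
  simp only [Ec_map_add, Ec_map_mul, Ec_comp, Ec_qw] at hD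
  norm_num [Ec_id, Ec_one] at hD
  constructor
  · show nab (Lpow (n+1) 0) = nab (vA * Lpow n 0)
      + epsInv * (Ec 1 (Lpow n (-1)) - Ec (-1) (Lpow n (-1)))
    unfold nab vA
    rw [show ((-1)/2 : ℚ) = -(1/2) by norm_num]
    rw [hA, hB]
    simp only [Ec_map_mul]
    ring
  · show nab (Lpow (n+1) (-1)) = vA * nab (Lpow n (-1)) + Cu (Lpow n 0)
    unfold nab vA Cu
    rw [show ((-1)/2 : ℚ) = -(1/2) by norm_num]
    rw [hC, hD]
    simp only [Ec_map_mul, Ec_comp, Ec_qA]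
    norm_num [Ec_qA]
    ring

end
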